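/- Fix c₁ > 0 and c₀ ∈ ℝ, and let U⁺ := { s ∈ ℂ : Im s > 0 and Im J_{c₁,c₀}(s) > 0 }. Then J_{c₁,c₀} is injective on U⁺ and its image J_{c₁,c₀}(U⁺) equals the open upper half plane { z ∈ ℂ : Im z > 0 }. -/

import Mathlib

/-- The map `J_{c₁,c₀}(s) = c₁·s + c₀ − Log((s − 1/2)/(s + 1/2))`, with the principal branch of
the complex logarithm. -/
noncomputable def Jmap (c₁ c₀ : ℝ) (s : ℂ) : ℂ :=
  c₁ * s + c₀ - Complex.log ((s - 1/2) / (s + 1/2))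

/-!
For `Im z > 0`, the equation `J s = z` says that `s` is a fixed point of
`s ↦ (z - c₀ + Log (M s)) / c₁`, where `M s = (s - 1/2) / (s + 1/2)` is given by an element of
`SL(2, ℝ)`. Since `Log` maps `ℍ` onto the strip `0 < Im < π`, this map sends `ℍ` into itself.
Measured by `sinh (d / 2)`, with `d` the hyperbolic distance, it contracts by the factor
`π / (π + Im z) < 1`: `M` is a hyperbolic isometry, and the factor is the price of comparing the
strip, pushed up by `Im z`, with `ℍ` (the elementary inequality `sq_add_sq_mul_sin_mul_sin_le`).
Such a contraction of a complete metric space has exactly one fixed point, so `J = z` has exactly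
one solution in `ℍ`, and that solution lies in `U⁺`.
-/

open Set Function Filter Topology
open scoped Real UpperHalfPlane MatrixGroups

section SinhHalfDistContraction

variable {X : Type*} [MetricSpace X] {T : X → X} {k : ℝ}

lemma dist_le_two_mul_sinh_half_dist (x y : X) : dist x y ≤ 2 * Real.sinh (dist x y / 2) := by
  linarith [Real.self_le_sinh_iff.2 (by positivity : 0 ≤ dist x y / 2)]

lemma continuous_of_sinh_half_dist_le
    (hT : ∀ x y, Real.sinh (dist (T x) (T y) / 2) ≤ k * Real.sinh (dist x y / 2)) :
    Continuous T := by
  refine continuous_iff_continuousAt.2 fun y => tendsto_iff_dist_tendsto_zero.2 ?_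
  have hlim : Tendsto (fun x => 2 * k * Real.sinh (dist x y / 2)) (𝓝 y) (𝓝 0) := by
    have : Continuous fun x => 2 * k * Real.sinh (dist x y / 2) := by fun_prop
    simpa using this.tendsto y
  refine squeeze_zero (fun _ => dist_nonneg) (fun x => ?_) hlim
  calc dist (T x) (T y) ≤ 2 * Real.sinh (dist (T x) (T y) / 2) :=
        dist_le_two_mul_sinh_half_dist _ _
    _ ≤ 2 * (k * Real.sinh (dist x y / 2)) := by gcongr; exact hT x y
    _ = 2 * k * Real.sinh (dist x y / 2) := by ring

lemma Function.IsFixedPt.eq_of_sinh_half_dist_le (hk : k < 1)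
    (hT : ∀ x y, Real.sinh (dist (T x) (T y) / 2) ≤ k * Real.sinh (dist x y / 2))
    {x y : X} (hx : IsFixedPt T x) (hy : IsFixedPt T y) : x = y := by
  have h := hT x y
  rw [hx.eq, hy.eq] at h
  have h₀ : 0 ≤ Real.sinh (dist x y / 2) := Real.sinh_nonneg_iff.2 (by positivity)
  have : Real.sinh (dist x y / 2) = 0 := by nlinarith
  simpa using this

lemma exists_isFixedPt_of_sinh_half_dist_le [CompleteSpace X] [Nonempty X] (hk₀ : 0 ≤ k)
    (hk : k < 1)
    (hT : ∀ x y, Real.sinh (dist (T x) (T y) / 2) ≤ k * Real.sinh (dist x y / 2)) :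
    ∃ x, IsFixedPt T x := by
  obtain ⟨x₀⟩ := ‹Nonempty X›
  set C := Real.sinh (dist x₀ (T x₀) / 2)
  have hsinh : ∀ n, Real.sinh (dist (T^[n] x₀) (T^[n + 1] x₀) / 2) ≤ C * k ^ n := by
    intro n
    induction n with
    | zero => simp [C]
    | succ n ih =>
      calc Real.sinh (dist (T^[n + 1] x₀) (T^[n + 1 + 1] x₀) / 2)
          ≤ k * Real.sinh (dist (T^[n] x₀) (T^[n + 1] x₀) / 2) := by
            simpa only [iterate_succ_apply'] using hT _ _
        _ ≤ k * (C * k ^ n) := by gcongr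
        _ = C * k ^ (n + 1) := by ring
  have hdist : ∀ n, dist (T^[n] x₀) (T^[n + 1] x₀) ≤ 2 * C * k ^ n := fun n => by
    linarith [dist_le_two_mul_sinh_half_dist (T^[n] x₀) (T^[n + 1] x₀), hsinh n]
  obtain ⟨x, hx⟩ := cauchySeq_tendsto_of_complete (cauchySeq_of_le_geometric k (2 * C) hk hdist)
  exact ⟨x, isFixedPt_of_tendsto_iterate hx (continuous_of_sinh_half_dist_le hT).continuousAt⟩

end SinhHalfDistContraction

section StripInequality

lemma sin_mul_pi_add_le {β θ : ℝ} (hβ : 0 ≤ β) (hθ : 0 ≤ θ) :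
    Real.sin θ * (π + β) ≤ π * (β + θ) := by
  nlinarith [Real.sin_le hθ, Real.sin_le_one θ, Real.pi_gt_three]

lemma mul_sin_le_mul_sin {a b : ℝ} (ha : 0 ≤ a) (hab : a ≤ b) (hb : b ≤ π) :
    a * Real.sin b ≤ b * Real.sin a := by
  obtain rfl | hb₀ := (ha.trans hab).eq_or_lt
  · simp [le_antisymm hab ha]
  have h := strictConcaveOn_sin_Icc.concaveOn.2 (⟨hb₀.le, hb⟩ : b ∈ Icc 0 π)
    (⟨le_rfl, Real.pi_pos.le⟩ : (0 : ℝ) ∈ Icc 0 π) (div_nonneg ha hb₀.le)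
    (sub_nonneg.2 (div_le_one_of_le₀ hab hb₀.le)) (add_sub_cancel (a / b) 1)
  simp only [smul_eq_mul, mul_zero, add_zero, Real.sin_zero, div_mul_cancel₀ a hb₀.ne'] at h
  rw [div_mul_eq_mul_div, div_le_iff₀ hb₀] at h
  linarith

lemma sq_half_sub_mul_sin_mul_sin_le {β θ₁ θ₂ : ℝ} (hβ : 0 ≤ β) (hθ₁ : θ₁ ∈ Icc 0 π)
    (hθ₂ : θ₂ ∈ Icc 0 π) :
    ((θ₁ - θ₂) / 2) ^ 2 * (Real.sin θ₁ * Real.sin θ₂) * (π + β) ^ 2 ≤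
      π ^ 2 * Real.sin ((θ₁ - θ₂) / 2) ^ 2 * ((β + θ₁) * (β + θ₂)) := by
  obtain ⟨h₁, h₁'⟩ := hθ₁
  obtain ⟨h₂, h₂'⟩ := hθ₂
  set m := (θ₁ + θ₂) / 2 with hm_def
  set y := (θ₁ - θ₂) / 2 with hy_def
  have hm : 0 ≤ m ∧ m ≤ π := ⟨by positivity, by linarith⟩
  have hym : |y| ≤ m := abs_le.2 ⟨by linarith, by linarith⟩
  have hprod : Real.sin θ₁ * Real.sin θ₂ = Real.sin m ^ 2 - Real.sin y ^ 2 := by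
    rw [show θ₁ = m + y by ring, show θ₂ = m - y by ring, Real.sin_add, Real.sin_sub]
    nlinarith [Real.sin_sq_add_cos_sq m, Real.sin_sq_add_cos_sq y]
  have hconc : y ^ 2 * Real.sin m ^ 2 ≤ m ^ 2 * Real.sin y ^ 2 := by
    have h := mul_sin_le_mul_sin (abs_nonneg y) hym hm.2
    have hs : 0 ≤ Real.sin m := Real.sin_nonneg_of_nonneg_of_le_pi hm.1 hm.2
    have habs : Real.sin |y| ^ 2 = Real.sin y ^ 2 := by
      rcases abs_choice y with h | h <;> simp [h]
    calc y ^ 2 * Real.sin m ^ 2 = (|y| * Real.sin m) ^ 2 := by rw [mul_pow, sq_abs]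
      _ ≤ (m * Real.sin |y|) ^ 2 := pow_le_pow_left₀ (by positivity) h 2
      _ = m ^ 2 * Real.sin y ^ 2 := by rw [mul_pow, habs]
  have hmβ : m * (π + β) ≤ π * (β + m) := by nlinarith
  rw [hprod, show (β + θ₁) * (β + θ₂) = (β + m) ^ 2 - y ^ 2 by ring]
  nlinarith [mul_le_mul_of_nonneg_right hconc (sq_nonneg (π + β)),
    pow_le_pow_left₀ (by positivity) hmβ 2, sq_nonneg (y * Real.sin y),
    mul_nonneg (sq_nonneg (y * Real.sin y)) (by positivity : 0 ≤ 2 * π * β + β ^ 2)]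

lemma sq_add_sq_mul_sin_mul_sin_le {β θ₁ θ₂ : ℝ} (hβ : 0 ≤ β) (hθ₁ : θ₁ ∈ Icc 0 π)
    (hθ₂ : θ₂ ∈ Icc 0 π) (x : ℝ) :
    (x ^ 2 + ((θ₁ - θ₂) / 2) ^ 2) * (Real.sin θ₁ * Real.sin θ₂) * (π + β) ^ 2 ≤
      π ^ 2 * (Real.sinh x ^ 2 + Real.sin ((θ₁ - θ₂) / 2) ^ 2) * ((β + θ₁) * (β + θ₂)) := by
  have hs₁ := Real.sin_nonneg_of_nonneg_of_le_pi hθ₁.1 hθ₁.2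
  have hs₂ := Real.sin_nonneg_of_nonneg_of_le_pi hθ₂.1 hθ₂.2
  have hsin : Real.sin θ₁ * Real.sin θ₂ * (π + β) ^ 2 ≤ π ^ 2 * ((β + θ₁) * (β + θ₂)) := by
    have := mul_le_mul (sin_mul_pi_add_le hβ hθ₁.1) (sin_mul_pi_add_le hβ hθ₂.1)
      (mul_nonneg hs₂ (by positivity)) (mul_nonneg Real.pi_pos.le (by linarith [hθ₁.1]))
    linarith
  have hx : x ^ 2 ≤ Real.sinh x ^ 2 := by
    rw [← sq_abs x, ← sq_abs (Real.sinh x), Real.abs_sinh]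
    exact pow_le_pow_left₀ (abs_nonneg x) (Real.self_le_sinh_iff.2 (abs_nonneg x)) 2
  have := sq_half_sub_mul_sin_mul_sin_le hβ hθ₁ hθ₂
  nlinarith [mul_le_mul hx hsin (mul_nonneg (mul_nonneg hs₁ hs₂) (sq_nonneg _)) (sq_nonneg _)]

end StripInequality

lemma Complex.normSq_exp_sub_exp_neg (v : ℂ) :
    normSq (exp v - exp (-v)) = 4 * (Real.sinh v.re ^ 2 + Real.sin v.im ^ 2) := by
  rw [normSq_apply, sub_re, sub_im, exp_re, exp_im, exp_re, exp_im, neg_re, neg_im,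
    Real.cos_neg, Real.sin_neg, Real.sinh_eq]
  have h : Real.exp v.re * Real.exp (-v.re) = 1 := by rw [← Real.exp_add]; simp
  nlinarith [Real.sin_sq_add_cos_sq v.im]

lemma Complex.normSq_exp_sub_exp (u₁ u₂ : ℂ) :
    normSq (exp u₁ - exp u₂) = 4 * (Real.exp u₁.re * Real.exp u₂.re) *
      (Real.sinh ((u₁ - u₂).re / 2) ^ 2 + Real.sin ((u₁ - u₂).im / 2) ^ 2) := by
  have h : exp u₁ - exp u₂ =
      exp ((u₁ + u₂) / 2) * (exp ((u₁ - u₂) / 2) - exp (-((u₁ - u₂) / 2))) := by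
    rw [mul_sub, ← exp_add, ← exp_add]; ring_nf
  have hexp : Real.exp ((u₁ + u₂) / 2).re ^ 2 = Real.exp u₁.re * Real.exp u₂.re := by
    rw [sq, ← Real.exp_add, ← Real.exp_add]
    congr 1
    simp only [div_ofNat_re, add_re]
    ring
  rw [h, normSq_mul, normSq_exp_sub_exp_neg, normSq_eq_norm_sq, norm_exp, hexp, div_ofNat_re,
    div_ofNat_im]
  ring

namespace UpperHalfPlane

lemma sin_arg_pos (w : ℍ) : 0 < Real.sin (Complex.arg w) := by
  rw [Complex.sin_arg]
  exact div_pos w.im_pos (norm_pos_iff.2 w.ne_zero)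

lemma sinh_half_dist_sq (z w : ℍ) :
    Real.sinh (dist z w / 2) ^ 2 = Complex.normSq ((z : ℂ) - w) / (4 * (z.im * w.im)) := by
  rw [sinh_half_dist, div_pow, mul_pow, Real.sq_sqrt (mul_pos z.im_pos w.im_pos).le,
    Complex.dist_eq, Complex.normSq_eq_norm_sq]
  norm_num

lemma sinh_half_dist_sq_eq_log_arg (w₁ w₂ : ℍ) :
    Real.sinh (dist w₁ w₂ / 2) ^ 2 =
      (Real.sinh ((Complex.log w₁ - Complex.log w₂).re / 2) ^ 2 +
        Real.sin ((Complex.arg w₁ - Complex.arg w₂) / 2) ^ 2) /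
      (Real.sin (Complex.arg w₁) * Real.sin (Complex.arg w₂)) := by
  have hexp (w : ℍ) : Complex.exp (Complex.log w) = w := Complex.exp_log w.ne_zero
  have him (w : ℍ) : w.im = Real.exp (Complex.log w).re * Real.sin (Complex.arg w) := by
    rw [← Complex.log_im, ← Complex.exp_im, hexp]; rfl
  have := sin_arg_pos w₁
  have := sin_arg_pos w₂
  have hnormSq := Complex.normSq_exp_sub_exp (Complex.log w₁) (Complex.log w₂)
  rw [hexp, hexp, Complex.sub_im, Complex.log_im, Complex.log_im] at hnormSq
  rw [sinh_half_dist_sq, hnormSq, him w₁, him w₂]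
  field_simp

end UpperHalfPlane

section JmapStep

variable {c₁ : ℝ} (hc₁ : 0 < c₁) (c₀ : ℝ) (z : ℍ)

noncomputable def logShift (w : ℍ) : ℍ :=
  ⟨(z - c₀ + Complex.log w) / c₁, by
    have := Complex.arg_nonneg_iff.2 w.im_pos.le
    simp only [Complex.div_ofReal_im, Complex.add_im, Complex.sub_im, Complex.ofReal_im,
      Complex.log_im, sub_zero, UpperHalfPlane.coe_im]
    exact div_pos (by linarith [z.im_pos]) hc₁⟩

lemma coe_logShift (w : ℍ) : (logShift hc₁ c₀ z w : ℂ) = (z - c₀ + Complex.log w) / c₁ := rfl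

lemma logShift_im (w : ℍ) : (logShift hc₁ c₀ z w).im = (z.im + Complex.arg w) / c₁ := by
  rw [← UpperHalfPlane.coe_im, coe_logShift]
  simp [Complex.log_im]

lemma sinh_half_dist_logShift_le (w₁ w₂ : ℍ) :
    Real.sinh (dist (logShift hc₁ c₀ z w₁) (logShift hc₁ c₀ z w₂) / 2) ≤
      π / (π + z.im) * Real.sinh (dist w₁ w₂ / 2) := by
  have hβ := z.im_pos
  have hsinh (a b : ℍ) : 0 ≤ Real.sinh (dist a b / 2) := Real.sinh_nonneg_iff.2 (by positivity)
  have hθ (w : ℍ) : Complex.arg w ∈ Icc 0 π :=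
    ⟨Complex.arg_nonneg_iff.2 w.im_pos.le, Complex.arg_le_pi w⟩
  rw [← pow_le_pow_iff_left₀ (hsinh _ _) (mul_nonneg (by positivity) (hsinh _ _)) two_ne_zero,
    mul_pow, UpperHalfPlane.sinh_half_dist_sq, UpperHalfPlane.sinh_half_dist_sq_eq_log_arg,
    logShift_im, logShift_im, coe_logShift, coe_logShift, ← sub_div, add_sub_add_left_eq_sub,
    Complex.normSq_div, Complex.normSq_ofReal, Complex.normSq_apply, Complex.sub_im,
    Complex.log_im, Complex.log_im]
  have key := sq_add_sq_mul_sin_mul_sin_le hβ.le (hθ w₁) (hθ w₂)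
    ((Complex.log w₁ - Complex.log w₂).re / 2)
  set x := (Complex.log w₁ - Complex.log w₂).re / 2
  set θ₁ := Complex.arg w₁
  set θ₂ := Complex.arg w₂
  have := w₁.sin_arg_pos
  have := w₂.sin_arg_pos
  have := (hθ w₁).1
  have := (hθ w₂).1
  have hlhs : ((Complex.log w₁ - Complex.log w₂).re * (Complex.log w₁ - Complex.log w₂).re +
      (θ₁ - θ₂) * (θ₁ - θ₂)) / (c₁ * c₁) / (4 * ((z.im + θ₁) / c₁ * ((z.im + θ₂) / c₁))) =
      (x ^ 2 + ((θ₁ - θ₂) / 2) ^ 2) / ((z.im + θ₁) * (z.im + θ₂)) := by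
    field_simp
    ring
  rw [hlhs, div_pow π, div_mul_div_comm, div_le_div_iff₀ (by positivity) (by positivity)]
  linarith

noncomputable def moebiusHalf : SL(2, ℝ) :=
  ⟨!![1, -1/2; 1, 1/2], by norm_num [Matrix.det_fin_two_of]⟩

lemma coe_moebiusHalf_smul (s : ℍ) : ((moebiusHalf • s : ℍ) : ℂ) = (s - 1/2) / (s + 1/2) := by
  rw [UpperHalfPlane.coe_specialLinearGroup_apply]
  simp [moebiusHalf]
  ring

noncomputable def jmapStep (s : ℍ) : ℍ := logShift hc₁ c₀ z (moebiusHalf • s)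

lemma sinh_half_dist_jmapStep_le (s₁ s₂ : ℍ) :
    Real.sinh (dist (jmapStep hc₁ c₀ z s₁) (jmapStep hc₁ c₀ z s₂) / 2) ≤
      π / (π + z.im) * Real.sinh (dist s₁ s₂ / 2) := by
  rw [← dist_smul moebiusHalf s₁ s₂]
  exact sinh_half_dist_logShift_le hc₁ c₀ z (moebiusHalf • s₁) (moebiusHalf • s₂)

lemma jmap_eq_iff_isFixedPt_jmapStep (s : ℍ) :
    Jmap c₁ c₀ s = z ↔ IsFixedPt (jmapStep hc₁ c₀ z) s := by
  have hc : (c₁ : ℂ) ≠ 0 := Complex.ofReal_ne_zero.2 hc₁.ne'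
  rw [IsFixedPt, UpperHalfPlane.ext_iff, jmapStep, coe_logShift, coe_moebiusHalf_smul, Jmap,
    div_eq_iff hc]
  constructor <;> intro h <;> linear_combination -h

end JmapStep

theorem Jmap_univalent_outside
    (c₁ c₀ : ℝ) (hc₁ : 0 < c₁) :
    Set.InjOn (Jmap c₁ c₀) {s : ℂ | 0 < s.im ∧ 0 < (Jmap c₁ c₀ s).im} ∧
    Jmap c₁ c₀ '' {s : ℂ | 0 < s.im ∧ 0 < (Jmap c₁ c₀ s).im} = {z : ℂ | 0 < z.im} := by
  have hk (z : ℍ) : π / (π + z.im) < 1 :=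
    (div_lt_one (by linarith [z.im_pos, Real.pi_pos])).2 (by linarith [z.im_pos])
  have hcontr := sinh_half_dist_jmapStep_le hc₁ c₀
  refine ⟨fun s₁ ⟨hs₁, hz⟩ s₂ ⟨hs₂, _⟩ h => ?_, Set.Subset.antisymm ?_ fun z hz => ?_⟩
  · set z : ℍ := ⟨Jmap c₁ c₀ s₁, hz⟩
    have h₁ := (jmap_eq_iff_isFixedPt_jmapStep hc₁ c₀ z ⟨s₁, hs₁⟩).1 rfl
    have h₂ := (jmap_eq_iff_isFixedPt_jmapStep hc₁ c₀ z ⟨s₂, hs₂⟩).1 h.symm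
    exact congrArg UpperHalfPlane.coe (h₁.eq_of_sinh_half_dist_le (hk z) (hcontr z) h₂)
  · rintro _ ⟨s, ⟨-, hs⟩, rfl⟩
    exact hs
  · set w : ℍ := ⟨z, hz⟩
    obtain ⟨s, hs⟩ := exists_isFixedPt_of_sinh_half_dist_le (by positivity) (hk w) (hcontr w)
    have hJ := (jmap_eq_iff_isFixedPt_jmapStep hc₁ c₀ w s).2 hs
    exact ⟨s, ⟨s.im_pos, hJ ▸ hz⟩, hJ⟩
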